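/- Let v : ℝ × ℝ → ℝ be a smooth solution of the heat equation v_t + v_xx = 0 such that for every t ∈ ℝ there exists x ∈ ℝ with v(t,x) ≠ 0. Let c0, c1, c2, c3, c4 be real constants and let μ : ℝ → ℝ be a differentiable function such that Q̂[v](t,x) = μ(t)·v(t,x) for all (t,x), where Q̂[v] := (c2·(x²/4 − t/2) + c4·x/2)·v − (c0 + 2c1·t + c2·t²)·v_t − (c1·x + c2·t·x + c3 + c4·t)·v_x. Then μ is a constant function. -/

import Mathlib

/-- Partial derivative with respect to the first variable `t`. -/
noncomputable def pt (f : ℝ × ℝ → ℝ) : ℝ × ℝ → ℝ :=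
  fun p => deriv (fun s => f (s, p.2)) p.1

/-- Partial derivative with respect to the second variable `x`. -/
noncomputable def px (f : ℝ × ℝ → ℝ) : ℝ × ℝ → ℝ :=
  fun p => deriv (fun s => f (p.1, s)) p.2

private lemma slice1_diff {f : ℝ × ℝ → ℝ} (hf : ContDiff ℝ (⊤ : ℕ∞) f) (x t : ℝ) :
    DifferentiableAt ℝ (fun s => f (s, x)) t :=
  ((hf.differentiable (by simp)).comp (differentiable_id.prodMk (differentiable_const x))) t

private lemma slice2_diff {f : ℝ × ℝ → ℝ} (hf : ContDiff ℝ (⊤ : ℕ∞) f) (t x : ℝ) :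
    DifferentiableAt ℝ (fun s => f (t, s)) x :=
  ((hf.differentiable (by simp)).comp ((differentiable_const t).prodMk differentiable_id)) x

private lemma hasDerivAt_pt {f : ℝ × ℝ → ℝ} (hf : ContDiff ℝ (⊤ : ℕ∞) f) (t x : ℝ) :
    HasDerivAt (fun s => f (s, x)) (pt f (t, x)) t :=
  (slice1_diff hf x t).hasDerivAt

private lemma hasDerivAt_px {f : ℝ × ℝ → ℝ} (hf : ContDiff ℝ (⊤ : ℕ∞) f) (t x : ℝ) :
    HasDerivAt (fun s => f (t, s)) (px f (t, x)) x :=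
  (slice2_diff hf t x).hasDerivAt

private lemma pt_eq_fderiv {f : ℝ × ℝ → ℝ} (hf : ContDiff ℝ (⊤ : ℕ∞) f) :
    pt f = fun p => fderiv ℝ f p (1, 0) := by
  funext p
  have hg : HasDerivAt (fun s : ℝ => (s, p.2)) ((1:ℝ), (0:ℝ)) p.1 :=
    (hasDerivAt_id p.1).prodMk (hasDerivAt_const _ _)
  have h := ((hf.differentiable (by simp) (p.1, p.2)).hasFDerivAt).comp_hasDerivAt p.1 hg
  simpa [pt, Function.comp_def] using h.deriv

private lemma px_eq_fderiv {f : ℝ × ℝ → ℝ} (hf : ContDiff ℝ (⊤ : ℕ∞) f) :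
    px f = fun p => fderiv ℝ f p (0, 1) := by
  funext p
  have hg : HasDerivAt (fun s : ℝ => (p.1, s)) ((0:ℝ), (1:ℝ)) p.2 :=
    (hasDerivAt_const _ _).prodMk (hasDerivAt_id p.2)
  have h := ((hf.differentiable (by simp) (p.1, p.2)).hasFDerivAt).comp_hasDerivAt p.2 hg
  simpa [px, Function.comp_def] using h.deriv

private lemma contDiff_pt {f : ℝ × ℝ → ℝ} (hf : ContDiff ℝ (⊤ : ℕ∞) f) : ContDiff ℝ (⊤ : ℕ∞) (pt f) := by
  rw [pt_eq_fderiv hf]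
  exact (hf.fderiv_right (by simp)).clm_apply contDiff_const

private lemma contDiff_px {f : ℝ × ℝ → ℝ} (hf : ContDiff ℝ (⊤ : ℕ∞) f) : ContDiff ℝ (⊤ : ℕ∞) (px f) := by
  rw [px_eq_fderiv hf]
  exact (hf.fderiv_right (by simp)).clm_apply contDiff_const

private lemma pt_px_swap {f : ℝ × ℝ → ℝ} (hf : ContDiff ℝ (⊤ : ℕ∞) f) (p : ℝ × ℝ) :
    pt (px f) p = px (pt f) p := by
  have hd : ∀ y, HasFDerivAt f (fderiv ℝ f y) y := fun y =>
    (hf.differentiable (by simp) y).hasFDerivAt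
  have hf' : ContDiff ℝ (⊤ : ℕ∞) (fderiv ℝ f) := hf.fderiv_right (by simp)
  have h2 : HasFDerivAt (fderiv ℝ f) (fderiv ℝ (fderiv ℝ f) p) p :=
    (hf'.differentiable (by simp) p).hasFDerivAt
  have hsymm := second_derivative_symmetric hd h2 ((1:ℝ), (0:ℝ)) ((0:ℝ), (1:ℝ))
  have e1 : fderiv ℝ (fun q => fderiv ℝ f q ((0:ℝ), (1:ℝ))) p ((1:ℝ), (0:ℝ))
      = fderiv ℝ (fderiv ℝ f) p (1, 0) (0, 1) := by
    have h := (h2.clm_apply (hasFDerivAt_const ((0:ℝ), (1:ℝ)) p)).fderiv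
    rw [h]; simp
  have e2 : fderiv ℝ (fun q => fderiv ℝ f q ((1:ℝ), (0:ℝ))) p ((0:ℝ), (1:ℝ))
      = fderiv ℝ (fderiv ℝ f) p (0, 1) (1, 0) := by
    have h := (h2.clm_apply (hasFDerivAt_const ((1:ℝ), (0:ℝ)) p)).fderiv
    rw [h]; simp
  calc pt (px f) p = fderiv ℝ (px f) p (1, 0) := by rw [pt_eq_fderiv (contDiff_px hf)]
    _ = fderiv ℝ (fun q => fderiv ℝ f q ((0:ℝ), (1:ℝ))) p (1, 0) := by rw [px_eq_fderiv hf]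
    _ = fderiv ℝ (fderiv ℝ f) p (1, 0) (0, 1) := e1
    _ = fderiv ℝ (fderiv ℝ f) p (0, 1) (1, 0) := hsymm
    _ = fderiv ℝ (fun q => fderiv ℝ f q ((1:ℝ), (0:ℝ))) p (0, 1) := e2.symm
    _ = fderiv ℝ (pt f) p (0, 1) := by rw [pt_eq_fderiv hf]
    _ = px (pt f) p := by rw [px_eq_fderiv (contDiff_pt hf)]

/-- If a smooth solution `v` of the heat equation, nonzero somewhere on each time
slice, satisfies `Q̂[v] = μ(t) v` for a differentiable function `μ`, then `μ` is
constant. -/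
theorem stmt7 (v : ℝ × ℝ → ℝ) (hv : ContDiff ℝ (⊤ : ℕ∞) v)
    (hheat : ∀ p : ℝ × ℝ, pt v p + px (px v) p = 0)
    (hnz : ∀ t : ℝ, ∃ x : ℝ, v (t, x) ≠ 0)
    (c0 c1 c2 c3 c4 : ℝ) (μ : ℝ → ℝ) (hμ : Differentiable ℝ μ)
    (hQ : ∀ p : ℝ × ℝ,
      (c2 * (p.2 ^ 2 / 4 - p.1 / 2) + c4 * p.2 / 2) * v p
        - (c0 + 2 * c1 * p.1 + c2 * p.1 ^ 2) * pt v p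
        - (c1 * p.2 + c2 * p.1 * p.2 + c3 + c4 * p.1) * px v p = μ p.1 * v p) :
    ∃ c : ℝ, ∀ t : ℝ, μ t = c := by
  have hvt : ContDiff ℝ (⊤ : ℕ∞) (pt v) := contDiff_pt hv
  have hvx : ContDiff ℝ (⊤ : ℕ∞) (px v) := contDiff_px hv
  have hvxx : ContDiff ℝ (⊤ : ℕ∞) (px (px v)) := contDiff_px hvx
  have hvxt : ContDiff ℝ (⊤ : ℕ∞) (px (pt v)) := contDiff_px hvt
  have hderiv : ∀ t : ℝ, deriv μ t = 0 := by
    intro t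
    obtain ⟨x, hx⟩ := hnz t
    -- t-direction expansion
    have h1 : HasDerivAt (fun s : ℝ => c2 * (x ^ 2 / 4 - s / 2) + c4 * x / 2) (-(c2/2)) t := by
      have := ((((hasDerivAt_id t).div_const 2).const_sub (x ^ 2 / 4)).const_mul c2).add_const
        (c4 * x / 2)
      exact this.congr_deriv (by ring)
    have h2 : HasDerivAt (fun s : ℝ => c0 + 2 * c1 * s + c2 * s ^ 2) (2*c1 + 2*c2*t) t := by
      have := (((hasDerivAt_id t).const_mul (2 * c1)).const_add c0).add
        ((hasDerivAt_pow 2 t).const_mul c2)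
      exact this.congr_deriv (by push_cast; ring)
    have h3 : HasDerivAt (fun s : ℝ => c1 * x + c2 * s * x + c3 + c4 * s) (c2*x + c4) t := by
      have := (((((hasDerivAt_id t).const_mul c2).mul_const x).const_add (c1 * x)).add_const
        c3).add ((hasDerivAt_id t).const_mul c4)
      exact this.congr_deriv (by ring)
    have hTder : HasDerivAt
        (fun s => (c2 * (x ^ 2 / 4 - s / 2) + c4 * x / 2) * v (s, x)
          - (c0 + 2 * c1 * s + c2 * s ^ 2) * pt v (s, x)
          - (c1 * x + c2 * s * x + c3 + c4 * s) * px v (s, x))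
        ((-(c2/2)) * v (t, x) + (c2 * (x ^ 2 / 4 - t / 2) + c4 * x / 2) * pt v (t, x)
          - ((2*c1 + 2*c2*t) * pt v (t, x)
              + (c0 + 2 * c1 * t + c2 * t ^ 2) * pt (pt v) (t, x))
          - ((c2*x + c4) * px v (t, x)
              + (c1 * x + c2 * t * x + c3 + c4 * t) * pt (px v) (t, x))) t :=
      ((h1.mul (hasDerivAt_pt hv t x)).sub (h2.mul (hasDerivAt_pt hvt t x))).sub
        (h3.mul (hasDerivAt_pt hvx t x))
    have hfun : (fun s => μ s * v (s, x))
        = (fun s => (c2 * (x ^ 2 / 4 - s / 2) + c4 * x / 2) * v (s, x)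
          - (c0 + 2 * c1 * s + c2 * s ^ 2) * pt v (s, x)
          - (c1 * x + c2 * s * x + c3 + c4 * s) * px v (s, x)) :=
      funext fun s => (hQ (s, x)).symm
    have hμv : HasDerivAt (fun s => μ s * v (s, x))
        (deriv μ t * v (t, x) + μ t * pt v (t, x)) t :=
      ((hμ t).hasDerivAt).mul (hasDerivAt_pt hv t x)
    rw [hfun] at hμv
    have eq1 := hμv.unique hTder
    -- x-direction: first derivative identity, for all y
    have eqX : ∀ y : ℝ, μ t * px v (t, y)
        = ((c2 * (y / 2) + c4 / 2) * v (t, y)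
            + (c2 * (y ^ 2 / 4 - t / 2) + c4 * y / 2) * px v (t, y)
          - (c0 + 2 * c1 * t + c2 * t ^ 2) * px (pt v) (t, y)
          - ((c1 + c2 * t) * px v (t, y)
              + (c1 * y + c2 * t * y + c3 + c4 * t) * px (px v) (t, y))) := by
      intro y
      have a1 : HasDerivAt (fun y' : ℝ => c2 * (y' ^ 2 / 4 - t / 2) + c4 * y' / 2)
          (c2 * (y / 2) + c4 / 2) y := by
        have := ((((hasDerivAt_pow 2 y).div_const 4).sub_const (t / 2)).const_mul c2).add
          (((hasDerivAt_id y).const_mul c4).div_const 2)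
        exact this.congr_deriv (by push_cast; ring)
      have a2 : HasDerivAt (fun y' : ℝ => c1 * y' + c2 * t * y' + c3 + c4 * t)
          (c1 + c2 * t) y := by
        have := ((((hasDerivAt_id y).const_mul c1).add
          ((hasDerivAt_id y).const_mul (c2 * t))).add_const c3).add_const (c4 * t)
        exact this.congr_deriv (by ring)
      have hR : HasDerivAt
          (fun y' => (c2 * (y' ^ 2 / 4 - t / 2) + c4 * y' / 2) * v (t, y')
            - (c0 + 2 * c1 * t + c2 * t ^ 2) * pt v (t, y')
            - (c1 * y' + c2 * t * y' + c3 + c4 * t) * px v (t, y'))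
          ((c2 * (y / 2) + c4 / 2) * v (t, y)
              + (c2 * (y ^ 2 / 4 - t / 2) + c4 * y / 2) * px v (t, y)
            - (c0 + 2 * c1 * t + c2 * t ^ 2) * px (pt v) (t, y)
            - ((c1 + c2 * t) * px v (t, y)
                + (c1 * y + c2 * t * y + c3 + c4 * t) * px (px v) (t, y))) y :=
        ((a1.mul (hasDerivAt_px hv t y)).sub
          ((hasDerivAt_px hvt t y).const_mul (c0 + 2 * c1 * t + c2 * t ^ 2))).sub
          (a2.mul (hasDerivAt_px hvx t y))
      have hfunx : (fun y' => μ t * v (t, y'))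
          = (fun y' => (c2 * (y' ^ 2 / 4 - t / 2) + c4 * y' / 2) * v (t, y')
            - (c0 + 2 * c1 * t + c2 * t ^ 2) * pt v (t, y')
            - (c1 * y' + c2 * t * y' + c3 + c4 * t) * px v (t, y')) :=
        funext fun y' => (hQ (t, y')).symm
      have hL : HasDerivAt (fun y' => μ t * v (t, y')) (μ t * px v (t, y)) y :=
        (hasDerivAt_px hv t y).const_mul (μ t)
      rw [hfunx] at hL
      exact hL.unique hR
    -- second x-derivative
    have hGfun : (fun y => μ t * px v (t, y))
        = (fun y => (c2 * (y / 2) + c4 / 2) * v (t, y)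
            + (c2 * (y ^ 2 / 4 - t / 2) + c4 * y / 2) * px v (t, y)
          - (c0 + 2 * c1 * t + c2 * t ^ 2) * px (pt v) (t, y)
          - ((c1 + c2 * t) * px v (t, y)
              + (c1 * y + c2 * t * y + c3 + c4 * t) * px (px v) (t, y))) :=
      funext fun y => eqX y
    have hL2 : HasDerivAt (fun y => μ t * px v (t, y)) (μ t * px (px v) (t, x)) x :=
      (hasDerivAt_px hvx t x).const_mul (μ t)
    rw [hGfun] at hL2
    have u1 : HasDerivAt (fun y : ℝ => c2 * (y / 2) + c4 / 2) (c2 / 2) x := by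
      have := (((hasDerivAt_id x).div_const 2).const_mul c2).add_const (c4 / 2)
      exact this.congr_deriv (by ring)
    have a1x : HasDerivAt (fun y : ℝ => c2 * (y ^ 2 / 4 - t / 2) + c4 * y / 2)
        (c2 * (x / 2) + c4 / 2) x := by
      have := ((((hasDerivAt_pow 2 x).div_const 4).sub_const (t / 2)).const_mul c2).add
        (((hasDerivAt_id x).const_mul c4).div_const 2)
      exact this.congr_deriv (by push_cast; ring)
    have a2x : HasDerivAt (fun y : ℝ => c1 * y + c2 * t * y + c3 + c4 * t) (c1 + c2 * t) x := by
      have := ((((hasDerivAt_id x).const_mul c1).add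
        ((hasDerivAt_id x).const_mul (c2 * t))).add_const c3).add_const (c4 * t)
      exact this.congr_deriv (by ring)
    have hR2 : HasDerivAt
        (fun y => (c2 * (y / 2) + c4 / 2) * v (t, y)
            + (c2 * (y ^ 2 / 4 - t / 2) + c4 * y / 2) * px v (t, y)
          - (c0 + 2 * c1 * t + c2 * t ^ 2) * px (pt v) (t, y)
          - ((c1 + c2 * t) * px v (t, y)
              + (c1 * y + c2 * t * y + c3 + c4 * t) * px (px v) (t, y)))
        ((c2 / 2 * v (t, x) + (c2 * (x / 2) + c4 / 2) * px v (t, x))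
            + ((c2 * (x / 2) + c4 / 2) * px v (t, x)
              + (c2 * (x ^ 2 / 4 - t / 2) + c4 * x / 2) * px (px v) (t, x))
          - (c0 + 2 * c1 * t + c2 * t ^ 2) * px (px (pt v)) (t, x)
          - ((c1 + c2 * t) * px (px v) (t, x)
              + ((c1 + c2 * t) * px (px v) (t, x)
                + (c1 * x + c2 * t * x + c3 + c4 * t) * px (px (px v)) (t, x)))) x :=
      (((u1.mul (hasDerivAt_px hv t x)).add (a1x.mul (hasDerivAt_px hvx t x))).sub
        ((hasDerivAt_px hvxt t x).const_mul (c0 + 2 * c1 * t + c2 * t ^ 2))).sub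
        (((hasDerivAt_px hvx t x).const_mul (c1 + c2 * t)).add
          (a2x.mul (hasDerivAt_px hvxx t x)))
    have eq2 := hL2.unique hR2
    -- heat equation consequences
    have h0 := hheat (t, x)
    have hT0 : HasDerivAt (fun s => pt v (s, x) + px (px v) (s, x))
        (pt (pt v) (t, x) + pt (px (px v)) (t, x)) t :=
      (hasDerivAt_pt hvt t x).add (hasDerivAt_pt hvxx t x)
    have hheatfunT : (fun s => pt v (s, x) + px (px v) (s, x)) = (fun _ : ℝ => (0:ℝ)) :=
      funext fun s => hheat (s, x)
    rw [hheatfunT] at hT0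
    have hT := hT0.unique (hasDerivAt_const t 0)
    have hX0 : HasDerivAt (fun y => pt v (t, y) + px (px v) (t, y))
        (px (pt v) (t, x) + px (px (px v)) (t, x)) x :=
      (hasDerivAt_px hvt t x).add (hasDerivAt_px hvxx t x)
    have hheatfunX : (fun y => pt v (t, y) + px (px v) (t, y)) = (fun _ : ℝ => (0:ℝ)) :=
      funext fun y => hheat (t, y)
    rw [hheatfunX] at hX0
    have hXe := hX0.unique (hasDerivAt_const x 0)
    -- swap lemmas
    have sw1 : pt (px v) (t, x) = px (pt v) (t, x) := pt_px_swap hv (t, x)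
    have sw2 : px (px (pt v)) (t, x) = pt (px (px v)) (t, x) := by
      have e : px (pt v) = pt (px v) := funext fun q => (pt_px_swap hv q).symm
      rw [e]
      exact (pt_px_swap hvx (t, x)).symm
    have key : deriv μ t * v (t, x) = 0 := by
      linear_combination eq1 + eq2
        - (μ t - (c2 * (x ^ 2 / 4 - t / 2) + c4 * x / 2) + 2 * (c1 + c2 * t)) * h0
        - (c0 + 2 * c1 * t + c2 * t ^ 2) * hT
        - (c1 * x + c2 * t * x + c3 + c4 * t) * hXe
        - (c0 + 2 * c1 * t + c2 * t ^ 2) * sw2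
        - (c1 * x + c2 * t * x + c3 + c4 * t) * sw1
    rcases mul_eq_zero.mp key with h | h
    · exact h
    · exact absurd h hx
  exact ⟨μ 0, fun t => is_const_of_deriv_eq_zero hμ hderiv t 0⟩
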